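/- arXiv:1602.07774 — 3 statements merged into one kernel-verified Lean document; each statement's English description precedes it below -/
import Mathlib

section
/- Let p < 0, let α_1, ..., α_N > 0, and let u_1, ..., u_N be unit vectors in ℝⁿ not concentrated on any closed hemisphere (i.e., there is no x ≠ 0 with x·u_k ≤ 0 for all k). Let P be a polytope containing the origin in its interior all of whose facet outer normals belong to {u_1,...,u_N}. Then there exists a unique point ξ(P) in the interior of P minimizing Φ_P(ξ) = Σ_{k=1}^N α_k (h(P,u_k) − ξ·u_k)^p over the interior of P. -/
open Set

/-- The support function of a set `K` in direction `v`. -/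
noncomputable def spt {n : ℕ} (K : Set (EuclideanSpace ℝ (Fin n)))
    (v : EuclideanSpace ℝ (Fin n)) : ℝ :=
  sSup ((fun x => (inner ℝ x v : ℝ)) '' K)

/-!
On the interior of `P`, which is the open polyhedron `{ξ | ∀ k, ⟪ξ, u k⟫ < h(P, u k)}`, the
function `Φ_P` is a positive combination of the strictly convex function `t ↦ t ^ p`, `p < 0`,
evaluated at the affine forms `h(P, u k) - ⟪ξ, u k⟫`. Since the `u k` lie in no closed
hemisphere, every nonzero direction moves one of these forms, so `Φ_P` is strictly convex and
has at most one minimizer. Each term blows up where its form tends to `0`, so `Φ_P` exceeds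
`Φ_P(0)` outside a compact set `{ξ | ∀ k, ⟪ξ, u k⟫ ≤ h(P, u k) - ε}`, on which the minimum is
attained.
-/

open Filter Topology Bornology RealInnerProductSpace

theorem strictConvexOn_rpow_of_neg {p : ℝ} (hp : p < 0) :
    StrictConvexOn ℝ (Ioi 0) fun x : ℝ => x ^ p := by
  refine strictConvexOn_of_deriv2_pos' (convex_Ioi 0)
    (fun x hx => (Real.continuousAt_rpow_const x p (Or.inl hx.ne')).continuousWithinAt)
    fun x hx => ?_
  have h2 : (descPochhammer ℝ 2).eval p = p * (p - 1) := by
    simp [descPochhammer_succ_right]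
  rw [Real.iter_deriv_rpow_const, h2]
  exact mul_pos (mul_pos_of_neg_of_neg hp (by linarith)) (Real.rpow_pos_of_pos hx _)

section Barrier

variable {E ι : Type*} [NormedAddCommGroup E] [InnerProductSpace ℝ E]

def openPolyhedron (u : ι → E) (c : ι → ℝ) : Set E :=
  {ξ | ∀ k, ⟪ξ, u k⟫ < c k}

def barrier [Fintype ι] (α : ι → ℝ) (f : ℝ → ℝ) (c : ι → ℝ) (u : ι → E) (ξ : E) : ℝ :=
  ∑ k, α k * f (c k - ⟪ξ, u k⟫)

variable {f : ℝ → ℝ} {α c : ι → ℝ} {u : ι → E}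

theorem Bornology.IsBounded.bddAbove_inner_image {K : Set E} (hK : IsBounded K) (v : E) :
    BddAbove ((fun x => ⟪x, v⟫) '' K) :=
  have ⟨R, hR⟩ := isBounded_iff_forall_norm_le.1 hK
  ⟨R * ‖v‖, forall_mem_image.2 fun x hx =>
    (real_inner_le_norm x v).trans (mul_le_mul_of_nonneg_right (hR x hx) (norm_nonneg v))⟩

theorem isOpen_openPolyhedron [Finite ι] : IsOpen (openPolyhedron u c) := by
  rw [openPolyhedron, ofPred_forall]
  exact isOpen_iInter_of_finite fun k => isOpen_lt (by fun_prop) continuous_const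

theorem convex_openPolyhedron : Convex ℝ (openPolyhedron u c) := by
  rw [openPolyhedron, ofPred_forall]
  exact convex_iInter fun k => convex_halfSpace_lt
    ⟨fun x y => inner_add_left x y (u k), fun t x => real_inner_smul_left x (u k) t⟩ (c k)

theorem continuousOn_barrier [Fintype ι] (hf : ContinuousOn f (Ioi 0)) :
    ContinuousOn (barrier α f c u) (openPolyhedron u c) :=
  continuousOn_finsetSum _ fun k _ => continuousOn_const.mul <|
    hf.comp (continuous_const.sub (continuous_id.inner continuous_const)).continuousOn
      fun _ hξ => sub_pos.2 (hξ k)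

theorem strictConvexOn_barrier [Fintype ι] (hα : ∀ k, 0 < α k) (hf : StrictConvexOn ℝ (Ioi 0) f)
    (hu : ∀ x : E, x ≠ 0 → ∃ k, ⟪x, u k⟫ ≠ 0) :
    StrictConvexOn ℝ (openPolyhedron u c) (barrier α f c u) := by
  refine ⟨convex_openPolyhedron, fun x hx y hy hxy a b ha hb hab => ?_⟩
  obtain ⟨k₀, hk₀⟩ := hu (x - y) (sub_ne_zero.2 hxy)
  have hx' : ∀ k, c k - ⟪x, u k⟫ ∈ Ioi 0 := fun k => sub_pos.2 (hx k)
  have hy' : ∀ k, c k - ⟪y, u k⟫ ∈ Ioi 0 := fun k => sub_pos.2 (hy k)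
  have hcomb : ∀ k,
      c k - ⟪a • x + b • y, u k⟫ = a • (c k - ⟪x, u k⟫) + b • (c k - ⟪y, u k⟫) := by
    intro k
    rw [inner_add_left, real_inner_smul_left, real_inner_smul_left, smul_eq_mul, smul_eq_mul]
    linear_combination (-c k) * hab
  have hne : c k₀ - ⟪x, u k₀⟫ ≠ c k₀ - ⟪y, u k₀⟫ := fun h =>
    hk₀ (by rw [inner_sub_left]; linarith)
  calc barrier α f c u (a • x + b • y)
      < ∑ k, α k * (a • f (c k - ⟪x, u k⟫) + b • f (c k - ⟪y, u k⟫)) := by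
        simp only [barrier, hcomb]
        exact Finset.sum_lt_sum
          (fun k _ => mul_le_mul_of_nonneg_left (hf.convexOn.2 (hx' k) (hy' k) ha.le hb.le hab)
            (hα k).le)
          ⟨k₀, Finset.mem_univ _, mul_lt_mul_of_pos_left (hf.2 (hx' k₀) (hy' k₀) hne ha hb hab)
            (hα k₀)⟩
    _ = a • barrier α f c u x + b • barrier α f c u y := by
        simp only [barrier, smul_eq_mul, Finset.mul_sum, ← Finset.sum_add_distrib]
        exact Finset.sum_congr rfl fun k _ => by ring

theorem exists_isMinOn_barrier [Fintype ι] [FiniteDimensional ℝ E] (hα : ∀ k, 0 < α k)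
    (hf_nonneg : ∀ t ∈ Ioi 0, 0 ≤ f t) (hf_cont : ContinuousOn f (Ioi 0))
    (hf_lim : Tendsto f (𝓝[>] 0) atTop) (hbd : IsBounded (openPolyhedron u c))
    (hne : (openPolyhedron u c).Nonempty) :
    ∃ ξ ∈ openPolyhedron u c, IsMinOn (barrier α f c u) (openPolyhedron u c) ξ := by
  set S := openPolyhedron u c
  set Φ := barrier α f c u
  obtain ⟨ξ₀, hξ₀⟩ := hne
  have hlarge : ∀ᶠ t in 𝓝[>] 0, ∀ k, Φ ξ₀ < α k * f t :=
    eventually_all.2 fun k => (hf_lim.const_mul_atTop (hα k)).eventually_gt_atTop _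
  obtain ⟨ε, hε, hεlarge⟩ := mem_nhdsGT_iff_exists_Ioo_subset.1 hlarge
  set K := {ξ : E | ∀ k, ⟪ξ, u k⟫ ≤ c k - ε}
  have hKS : K ⊆ S := fun ξ hξ k => (hξ k).trans_lt (sub_lt_self _ hε)
  have hK : IsCompact K := by
    refine Metric.isCompact_of_isClosed_isBounded ?_ (hbd.subset hKS)
    rw [show K = _ from ofPred_forall _]
    exact isClosed_iInter fun k => isClosed_le (by fun_prop) continuous_const
  have hout : ∀ ξ ∈ S \ K, Φ ξ₀ < Φ ξ := by
    rintro ξ ⟨hξS, hξK⟩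
    obtain ⟨k, hk⟩ : ∃ k, c k - ε < ⟪ξ, u k⟫ := by simpa [K] using hξK
    calc Φ ξ₀ < α k * f (c k - ⟪ξ, u k⟫) :=
          hεlarge ⟨sub_pos.2 (hξS k), by linarith⟩ k
      _ ≤ Φ ξ := Finset.single_le_sum (f := fun j => α j * f (c j - ⟪ξ, u j⟫))
          (fun j _ => mul_nonneg (hα j).le (hf_nonneg _ (sub_pos.2 (hξS j)))) (Finset.mem_univ k)
  have hξ₀K : ξ₀ ∈ K := by_contra fun h => lt_irrefl _ (hout ξ₀ ⟨hξ₀, h⟩)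
  obtain ⟨x, hxK, hx⟩ := hK.exists_isMinOn ⟨ξ₀, hξ₀K⟩ ((continuousOn_barrier hf_cont).mono hKS)
  refine ⟨x, hKS hxK, fun ξ hξ => ?_⟩
  by_cases hξK : ξ ∈ K
  · exact hx hξK
  · exact (hx hξ₀K).trans (hout ξ ⟨hξ, hξK⟩).le

theorem existsUnique_isMinOn_barrier [Fintype ι] [FiniteDimensional ℝ E] (hα : ∀ k, 0 < α k)
    (hf : StrictConvexOn ℝ (Ioi 0) f) (hf_nonneg : ∀ t ∈ Ioi 0, 0 ≤ f t)
    (hf_lim : Tendsto f (𝓝[>] 0) atTop) (hu : ∀ x : E, x ≠ 0 → ∃ k, ⟪x, u k⟫ ≠ 0)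
    (hbd : IsBounded (openPolyhedron u c)) (hne : (openPolyhedron u c).Nonempty) :
    ∃! ξ, ξ ∈ openPolyhedron u c ∧ IsMinOn (barrier α f c u) (openPolyhedron u c) ξ := by
  obtain ⟨ξ, hξ, hmin⟩ := exists_isMinOn_barrier hα hf_nonneg
    (hf.convexOn.continuousOn isOpen_Ioi) hf_lim hbd hne
  exact ⟨ξ, ⟨hξ, hmin⟩, fun η ⟨hη, hηmin⟩ =>
    (strictConvexOn_barrier hα hf hu).eq_of_isMinOn hηmin hmin hη hξ⟩

end Barrier

section SupportFunction

variable {n : ℕ} {K : Set (EuclideanSpace ℝ (Fin n))} {x v : EuclideanSpace ℝ (Fin n)}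

theorem inner_le_spt (hK : BddAbove ((fun y => ⟪y, v⟫) '' K)) (hx : x ∈ K) : ⟪x, v⟫ ≤ spt K v :=
  le_csSup hK ⟨x, hx, rfl⟩

theorem spt_le_of_forall_inner_le {b : ℝ} (hK : K.Nonempty) (h : ∀ y ∈ K, ⟪y, v⟫ ≤ b) :
    spt K v ≤ b :=
  csSup_le (hK.image _) (forall_mem_image.2 h)

theorem inner_lt_spt_of_mem_interior (hK : BddAbove ((fun y => ⟪y, v⟫) '' K)) (hv : v ≠ 0)
    (hx : x ∈ interior K) : ⟪x, v⟫ < spt K v := by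
  have hray : Tendsto (fun t : ℝ => x + t • v) (𝓝 0) (𝓝 x) :=
    (show Continuous fun t : ℝ => x + t • v by fun_prop).tendsto' 0 x (by simp)
  obtain ⟨t, htK, ht⟩ := (((hray.eventually (mem_interior_iff_mem_nhds.1 hx)).filter_mono
    nhdsWithin_le_nhds).and (self_mem_nhdsWithin (s := Ioi 0))).exists
  have h := inner_le_spt hK htK
  rw [inner_add_left, real_inner_smul_left, real_inner_self_eq_norm_sq] at h
  nlinarith [mul_pos (mem_Ioi.1 ht) (pow_pos (norm_pos_iff.2 hv) 2)]

theorem interior_eq_openPolyhedron_spt {N : ℕ} {u : Fin N → EuclideanSpace ℝ (Fin n)}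
    {b : Fin N → ℝ} {P : Set (EuclideanSpace ℝ (Fin n))} (hu : ∀ k, u k ≠ 0)
    (hP : P = ⋂ k, {x | ⟪x, u k⟫ ≤ b k}) (hbd : IsBounded P) (hne : P.Nonempty) :
    interior P = openPolyhedron u fun k => spt P (u k) := by
  refine Subset.antisymm (fun ξ hξ k =>
    inner_lt_spt_of_mem_interior (hbd.bddAbove_inner_image _) (hu k) hξ) ?_
  have hspt_le : ∀ k, spt P (u k) ≤ b k := fun k =>
    spt_le_of_forall_inner_le hne fun y hy => by rw [hP] at hy; exact mem_iInter.1 hy k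
  refine interior_maximal (fun ξ hξ => ?_) isOpen_openPolyhedron
  rw [hP]
  exact mem_iInter.2 fun k => (hξ k).le.trans (hspt_le k)

end SupportFunction

/-- Existence and uniqueness of the interior minimizer ξ(P) of Φ_P for a polytope
P whose facet outer normals all belong to {u_1,...,u_N}. -/
theorem stmt2 (n N : ℕ) (p : ℝ) (hp : p < 0) (α : Fin N → ℝ) (hα : ∀ k, 0 < α k)
    (u : Fin N → EuclideanSpace ℝ (Fin n)) (hu : ∀ k, ‖u k‖ = 1)
    (hhemi : ∀ x : EuclideanSpace ℝ (Fin n), x ≠ 0 → ∃ k, 0 < (inner ℝ x (u k) : ℝ))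
    (b : Fin N → ℝ) (P : Set (EuclideanSpace ℝ (Fin n)))
    (hP : P = ⋂ k, {x : EuclideanSpace ℝ (Fin n) | (inner ℝ x (u k) : ℝ) ≤ b k})
    (hbd : Bornology.IsBounded P)
    (h0 : (0 : EuclideanSpace ℝ (Fin n)) ∈ interior P) :
    ∃! ξ₀ : EuclideanSpace ℝ (Fin n), ξ₀ ∈ interior P ∧
      IsMinOn (fun ξ => ∑ k, α k * (spt P (u k) - (inner ℝ ξ (u k) : ℝ)) ^ p)
        (interior P) ξ₀ := by
  have hint := interior_eq_openPolyhedron_spt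
    (fun k => norm_ne_zero_iff.1 (by rw [hu k]; exact one_ne_zero)) hP hbd ⟨0, interior_subset h0⟩
  have hbd_int := hbd.subset (interior_subset (s := P))
  rw [hint] at h0 hbd_int ⊢
  exact existsUnique_isMinOn_barrier hα (strictConvexOn_rpow_of_neg hp)
    (fun t ht => (Real.rpow_pos_of_pos ht p).le) (tendsto_rpow_neg_nhdsGT_zero hp)
    (fun x hx => (hhemi x hx).imp fun _ => ne_of_gt) hbd_int ⟨0, h0⟩
end

section
/- Let u_1, ..., u_m, u be unit vectors in ℝⁿ such that the convex hull Q of {u_1,...,u_m} contains the ball of radius r > 0 centered at the origin. Then there exist indices i_1, ..., i_n ∈ {1,...,m} and coefficients a_1, ..., a_n with 0 ≤ a_j ≤ 1/r such that u = a_1 u_{i_1} + ... + a_n u_{i_n}. -/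
/-!
Push `v` out along its ray to the last point `t • v` of the compact polytope `Q`, so `r ≤ t`.
A Carathéodory representation of `t • v` by affinely independent vertices with positive weights
uses at most `n` of them, since `n + 1` of them would span a full-dimensional simplex with
`t • v` in its interior. Dividing the weights, which are at most `1`, by `t` gives coefficients
at most `1 / r`.
-/

open Metric Set Module

theorem exists_smul_mem_notMem_interior_of_isCompact
    {E : Type*} [NormedAddCommGroup E] [NormedSpace ℝ E] {K : Set E} (hK : IsCompact K)
    {v : E} (hv : v ≠ 0) {r : ℝ} (hr : r • v ∈ K) :
    ∃ t, r ≤ t ∧ t • v ∈ K ∧ t • v ∉ interior K := by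
  have hT : IsCompact (Ici r ∩ (fun t : ℝ => t • v) ⁻¹' K) :=
    ((isClosedEmbedding_smul_left hv).isCompact_preimage hK).inter_left isClosed_Ici
  obtain ⟨t, ⟨hrt, htK⟩, hmax⟩ :=
    hT.exists_isMaxOn ⟨r, self_mem_Ici, hr⟩ continuous_id.continuousOn
  refine ⟨t, hrt, htK, fun hint => ?_⟩
  have hnhds : ∀ᶠ s in nhdsWithin t (Ioi t), s • v ∈ interior K :=
    nhdsWithin_le_nhds <| (continuous_id.smul continuous_const).continuousAt.preimage_mem_nhds
      (isOpen_interior.mem_nhds hint)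
  obtain ⟨s, hsK, hts⟩ := (hnhds.and self_mem_nhdsWithin).exists
  exact (hmax ⟨hrt.trans hts.le, (interior_subset hsK : s • v ∈ K)⟩).not_gt hts

theorem AffineIndependent.card_le_finrank_of_notMem_interior_convexHull
    {E : Type*} [NormedAddCommGroup E] [NormedSpace ℝ E] [FiniteDimensional ℝ E]
    {ι : Type*} [Fintype ι] {z : ι → E} (hz : AffineIndependent ℝ z) {w : ι → ℝ}
    (hw₀ : ∀ i, 0 < w i) (hw₁ : ∑ i, w i = 1)
    (hx : ∑ i, w i • z i ∉ interior (convexHull ℝ (range z))) :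
    Fintype.card ι ≤ finrank ℝ E := by
  have hle : Fintype.card ι ≤ finrank ℝ E + 1 :=
    hz.card_le_finrank_succ.trans (Nat.succ_le_succ (Submodule.finrank_le _))
  refine Nat.le_of_lt_succ (hle.lt_of_ne fun hcard => hx ?_)
  -- `z` is then a simplex of full dimension, whose interior consists of the points
  -- with positive barycentric coordinates.
  let b : AffineBasis ι ℝ E := ⟨z, hz, hz.affineSpan_eq_top_iff_card_eq_finrank_add_one.2 hcard⟩
  have hb : ⇑b = z := rfl
  rw [← hb, b.interior_convexHull]
  intro i
  rw [← Finset.affineCombination_eq_linear_combination _ _ _ hw₁,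
    b.coord_apply_combination_of_mem (Finset.mem_univ i) hw₁]
  exact hw₀ i

theorem exists_fin_convex_combination_of_card_le
    {𝕜 E : Type*} [Field 𝕜] [LinearOrder 𝕜] [IsStrictOrderedRing 𝕜] [AddCommGroup E] [Module 𝕜 E]
    {ι : Type*} [Fintype ι] {d : ℕ} (hd : Fintype.card ι ≤ d) {s : Set E} {z : ι → E}
    (hz : range z ⊆ s) {w : ι → 𝕜} (hw₀ : ∀ i, 0 ≤ w i) (hw₁ : ∑ i, w i = 1) :
    ∃ (z' : Fin d → E) (w' : Fin d → 𝕜), range z' ⊆ s ∧ (∀ j, 0 ≤ w' j) ∧ ∑ j, w' j = 1 ∧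
      ∑ j, w' j • z' j = ∑ i, w i • z i := by
  obtain ⟨i₀⟩ : Nonempty ι := by
    by_contra h
    simp [not_nonempty_iff.1 h] at hw₁
  obtain ⟨e⟩ := Function.Embedding.nonempty_of_card_le (hd.trans (Fintype.card_fin d).ge)
  refine ⟨Function.extend e z fun _ => z i₀, Function.extend e w 0, ?_, ?_, ?_, ?_⟩
  · refine (range_extend_subset _ _ _).trans (union_subset hz ?_)
    rintro _ ⟨_, _, rfl⟩
    exact hz ⟨i₀, rfl⟩
  · intro j
    obtain ⟨i, hi⟩ | ⟨_, _, hi⟩ := range_extend_subset e w 0 ⟨j, rfl⟩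
    · exact hi ▸ hw₀ i
    · exact hi ▸ le_rfl
  · rw [← hw₁]
    refine (Fintype.sum_of_injective e e.injective _ _ (fun j hj => ?_) fun i => ?_).symm
    · exact Function.extend_apply' _ _ _ (by simpa using hj)
    · exact (e.injective.extend_apply _ _ i).symm
  · refine (Fintype.sum_of_injective e e.injective _ _ (fun j hj => ?_) fun i => ?_).symm
    · rw [Function.extend_apply' _ _ _ (by simpa using hj), Pi.zero_apply, zero_smul]
    · rw [e.injective.extend_apply, e.injective.extend_apply]

theorem exists_fin_convex_combination_of_finrank_le_of_notMem_interior
    {E : Type*} [NormedAddCommGroup E] [NormedSpace ℝ E] [FiniteDimensional ℝ E]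
    {d : ℕ} (hd : finrank ℝ E ≤ d) {s : Set E} {x : E} (hx : x ∈ convexHull ℝ s)
    (hxi : x ∉ interior (convexHull ℝ s)) :
    ∃ (z : Fin d → E) (w : Fin d → ℝ), range z ⊆ s ∧
      (∀ j, 0 ≤ w j) ∧ ∑ j, w j = 1 ∧ ∑ j, w j • z j = x := by
  obtain ⟨ι, _, z, w, hzs, hz, hw₀, hw₁, rfl⟩ := eq_pos_convex_span_of_mem_convexHull hx
  have hcard : Fintype.card ι ≤ finrank ℝ E :=
    hz.card_le_finrank_of_notMem_interior_convexHull hw₀ hw₁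
      fun h => hxi (interior_mono (convexHull_mono hzs) h)
  exact exists_fin_convex_combination_of_card_le (𝕜 := ℝ) (hcard.trans hd) hzs
    (fun i => (hw₀ i).le) hw₁

theorem stmt10_general (n m : ℕ) (u : Fin m → EuclideanSpace ℝ (Fin n))
    (v : EuclideanSpace ℝ (Fin n)) (hv : ‖v‖ = 1) (r : ℝ) (hr : 0 < r)
    (hball : closedBall (0 : EuclideanSpace ℝ (Fin n)) r ⊆ convexHull ℝ (Set.range u)) :
    ∃ (idx : Fin n → Fin m) (a : Fin n → ℝ),
      (∀ j, 0 ≤ a j ∧ a j ≤ 1 / r) ∧ v = ∑ j, a j • u (idx j) := by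
  have hQ : IsCompact (convexHull ℝ (range u)) := (finite_range u).isCompact_convexHull (𝕜 := ℝ)
  have hrv : r • v ∈ convexHull ℝ (range u) :=
    hball (by rw [mem_closedBall_zero_iff, norm_smul, hv, mul_one, Real.norm_of_nonneg hr.le])
  obtain ⟨t, hrt, htQ, htQi⟩ :=
    exists_smul_mem_notMem_interior_of_isCompact hQ (norm_ne_zero_iff.1 (hv ▸ one_ne_zero)) hrv
  obtain ⟨z, w, hzu, hw₀, hw₁, hwz⟩ :=
    exists_fin_convex_combination_of_finrank_le_of_notMem_interior
      (finrank_euclideanSpace_fin (n := n)).le htQ htQi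
  choose idx hidx using fun j => hzu ⟨j, rfl⟩
  have ht : 0 < t := hr.trans_le hrt
  refine ⟨idx, fun j => w j / t, fun j => ⟨div_nonneg (hw₀ j) ht.le, ?_⟩, ?_⟩
  · have hw_le_one : w j ≤ 1 :=
      hw₁ ▸ Finset.single_le_sum (fun i _ => hw₀ i) (Finset.mem_univ j)
    exact div_le_div₀ zero_le_one hw_le_one hr hrt
  · simp_rw [hidx, div_eq_inv_mul, mul_smul, ← Finset.smul_sum, hwz, smul_smul,
      inv_mul_cancel₀ ht.ne', one_smul]

/-- If the convex hull of unit vectors u_1,...,u_m contains the ball of radius r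
about the origin, then any unit vector is a combination of n of them with
coefficients in [0, 1/r]. -/
theorem stmt10 (n m : ℕ) (u : Fin m → EuclideanSpace ℝ (Fin n)) (hu : ∀ k, ‖u k‖ = 1)
    (v : EuclideanSpace ℝ (Fin n)) (hv : ‖v‖ = 1) (r : ℝ) (hr : 0 < r)
    (hball : closedBall (0 : EuclideanSpace ℝ (Fin n)) r ⊆ convexHull ℝ (Set.range u)) :
    ∃ (idx : Fin n → Fin m) (a : Fin n → ℝ),
      (∀ j, 0 ≤ a j ∧ a j ≤ 1 / r) ∧ v = ∑ j, a j • u (idx j) :=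
  stmt10_general n m u v hv r hr hball
end

section
/- Let p < 0, α_1, ..., α_N > 0, and let u_1, ..., u_N be unit vectors in ℝⁿ not concentrated on a closed hemisphere, such that for every linear subspace X of ℝⁿ with 1 ≤ dim X ≤ n−1, the set {u_1,...,u_N} ∩ X is concentrated on a closed hemisphere of S^{n−1} ∩ X (i.e., there exists x ∈ X, x ≠ 0, with x·u ≤ 0 for all u ∈ {u_1,...,u_N} ∩ X). Then any sequence (P_m) of polytopes with volume V(P_m) = 1, origin in the interior, and facet outer normals among {u_1,...,u_N}, is uniformly bounded (has bounded diameter). -/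
/-!
If the polytopes were unbounded, pick points `x_m ∈ P_m` with `σ_m = ‖x_m‖ → ∞` and rescale
by `σ_m`, truncating the right-hand sides at `σ_m`. Along a subsequence the rescaled right-hand
sides converge to some `g ≥ 0` and the rescaled points to a unit vector `y` with `⟪y, u_k⟫ ≤ g_k`.
Since the dilates by `σ_m` of the rescaled polytopes have volume at most one, the limit
polyhedron `{x | ⟪x, u_k⟫ ≤ g_k}` has no interior point, so the normals `S = {u_k | g_k = 0}`
lie in no open hemisphere. By Gordan's alternative some convex combination of `S` vanishes, and
the span of its support is essential for `S`. As no proper subspace is essential, `S` is not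
concentrated on any closed hemisphere of the whole space, contradicting `⟪y, u_k⟫ ≤ 0` on `S`.
-/

open Set MeasureTheory Metric Filter Topology Pointwise
open scoped RealInnerProductSpace

section Polyhedra

variable {E : Type*} [NormedAddCommGroup E] [InnerProductSpace ℝ E] {ι : Type*}

def polyhedron (u : ι → E) (c : ι → ℝ) : Set E :=
  ⋂ k, {x | ⟪x, u k⟫ ≤ c k}

@[simp]
lemma mem_polyhedron {u : ι → E} {c : ι → ℝ} {x : E} :
    x ∈ polyhedron u c ↔ ∀ k, ⟪x, u k⟫ ≤ c k :=
  mem_iInter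

/-- `X` is essential for `S` when `S ∩ X` is not concentrated on a closed hemisphere of `X`. -/
def IsEssential (S : Set E) (X : Submodule ℝ E) : Prop :=
  ∀ x ∈ X, x ≠ 0 → ∃ v ∈ S, v ∈ X ∧ 0 < ⟪x, v⟫

/-- Gordan's alternative. -/
lemma zero_mem_convexHull_of_not_exists_forall_inner_neg [FiniteDimensional ℝ E] {S : Finset E}
    (h : ¬∃ x : E, ∀ v ∈ S, ⟪x, v⟫ < 0) : (0 : E) ∈ convexHull ℝ (S : Set E) := by
  by_contra h0
  obtain ⟨f, t, hf0, hft⟩ := geometric_hahn_banach_point_closed (convex_convexHull ℝ _)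
    (S.finite_toSet.isCompact_convexHull ℝ).isClosed h0
  refine h ⟨-(InnerProductSpace.toDual ℝ E).symm f, fun v hv => ?_⟩
  rw [inner_neg_left, InnerProductSpace.toDual_symm_apply]
  linarith [hft v (subset_convexHull ℝ _ hv), map_zero f]

lemma eq_zero_of_mem_span_of_forall_inner_eq_zero {T : Set E} {x : E}
    (hx : x ∈ Submodule.span ℝ T) (h : ∀ v ∈ T, ⟪x, v⟫ = 0) : x = 0 :=
  have hperp : Submodule.span ℝ T ≤ (ℝ ∙ x)ᗮ := Submodule.span_le.2 fun v hv =>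
    Submodule.mem_orthogonal_singleton_iff_inner_right.2 (h v hv)
  inner_self_eq_zero.1 (Submodule.mem_orthogonal_singleton_iff_inner_right.1 (hperp hx))

lemma isEssential_span_of_sum_smul_eq_zero {S : Finset E} {w : E → ℝ} (hw : ∀ v ∈ S, 0 ≤ w v)
    (hsum : ∑ v ∈ S, w v • v = 0) :
    IsEssential (S : Set E) (Submodule.span ℝ {v | v ∈ S ∧ 0 < w v}) := by
  intro x hxX hx0
  by_contra! hneg
  have hterm : ∀ v ∈ S, w v * ⟪x, v⟫ ≤ 0 := fun v hv => by
    rcases (hw v hv).eq_or_lt with h | h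
    · simp [← h]
    · exact mul_nonpos_of_nonneg_of_nonpos h.le (hneg v hv (Submodule.subset_span ⟨hv, h⟩))
  have hzero : ∑ v ∈ S, w v * ⟪x, v⟫ = 0 := by
    simp_rw [← real_inner_smul_right, ← inner_sum, hsum, inner_zero_right]
  refine hx0 (eq_zero_of_mem_span_of_forall_inner_eq_zero hxX fun v ⟨hv, hwv⟩ => ?_)
  exact (mul_eq_zero.1 ((Finset.sum_eq_zero_iff_of_nonpos hterm).1 hzero v hv)).resolve_left hwv.ne'

theorem isEssential_top_of_not_exists_forall_inner_neg [FiniteDimensional ℝ E] {S : Finset E}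
    (hS0 : (0 : E) ∉ S) (hess : ∀ X : Submodule ℝ E, X ≠ ⊥ → X ≠ ⊤ → ¬IsEssential (S : Set E) X)
    (hS : ¬∃ x : E, ∀ v ∈ S, ⟪x, v⟫ < 0) : IsEssential (S : Set E) ⊤ := by
  obtain ⟨w, hw0, hw1, hwsum⟩ :=
    Finset.mem_convexHull'.1 (zero_mem_convexHull_of_not_exists_forall_inner_neg hS)
  have hX := isEssential_span_of_sum_smul_eq_zero hw0 hwsum
  by_cases htop : Submodule.span ℝ {v | v ∈ S ∧ 0 < w v} = ⊤
  · rwa [htop] at hX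
  refine absurd hX (hess _ ?_ htop)
  obtain ⟨v, hv, hwv⟩ := Finset.exists_lt_of_sum_lt (s := S) (f := fun _ => (0 : ℝ)) (g := w)
    (by simp [hw1])
  exact (Submodule.ne_bot_iff _).2 ⟨v, Submodule.subset_span ⟨hv, hwv⟩, ne_of_mem_of_not_mem hv hS0⟩

lemma isClosed_setOf_mem_polyhedron (u : ι → E) :
    IsClosed {p : (ι → ℝ) × E | p.2 ∈ polyhedron u p.1} := by
  simp only [mem_polyhedron, ofPred_forall]
  exact isClosed_iInter fun k => isClosed_le (by fun_prop) (by fun_prop)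

lemma exists_mem_nhds_subset_polyhedron [Finite ι] {u : ι → E} {g : ι → ℝ} {x : E}
    (hx : ∀ k, ⟪x, u k⟫ < g k) : ∃ U ∈ 𝓝 x, ∀ᶠ c in 𝓝 g, U ⊆ polyhedron u c := by
  have hopen : IsOpen {p : (ι → ℝ) × E | ∀ k, ⟪p.2, u k⟫ < p.1 k} := by
    simp only [ofPred_forall]
    exact isOpen_iInter_of_finite fun k => isOpen_lt (by fun_prop) (by fun_prop)
  obtain ⟨V, hV, U, hU, hVU⟩ := mem_nhds_prod_iff.1 (hopen.mem_nhds (x := (g, x)) hx)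
  exact ⟨U, hU, eventually_of_mem hV fun c hc y hy =>
    mem_polyhedron.2 fun k => (hVU (mk_mem_prod hc hy) k).le⟩

lemma exists_forall_inner_lt_of_forall_inner_neg [Finite ι] {u : ι → E} {g : ι → ℝ} (hg : 0 ≤ g)
    {x : E} (hx : ∀ k, g k = 0 → ⟪x, u k⟫ < 0) : ∃ x', ∀ k, ⟪x', u k⟫ < g k := by
  have hsmall : ∀ᶠ t in 𝓝[>] (0 : ℝ), ∀ k, ⟪t • x, u k⟫ < g k := by
    refine eventually_all.2 fun k => ?_
    simp_rw [real_inner_smul_left]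
    rcases (hg k).eq_or_lt with h | h
    · filter_upwards [self_mem_nhdsWithin] with t ht
      exact h ▸ mul_neg_of_pos_of_neg ht (hx k h.symm)
    · have hlim : Tendsto (fun t : ℝ => t * ⟪x, u k⟫) (𝓝[>] 0) (𝓝 0) := by
        simpa using ((tendsto_id (x := 𝓝 (0 : ℝ))).mul_const _).mono_left nhdsWithin_le_nhds
      exact hlim.eventually_lt_const h
  obtain ⟨t, ht⟩ := hsmall.exists
  exact ⟨t • x, ht⟩

lemma smul_polyhedron_min_div_subset {u : ι → E} {b : ι → ℝ} {σ : ℝ} (hσ : 0 < σ) :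
    σ • polyhedron u (fun k => min (b k) σ / σ) ⊆ polyhedron u b := by
  rintro _ ⟨x, hx, rfl⟩
  refine mem_polyhedron.2 fun k => ?_
  rw [real_inner_smul_left]
  calc σ * ⟪x, u k⟫ ≤ σ * (min (b k) σ / σ) :=
        mul_le_mul_of_nonneg_left (mem_polyhedron.1 hx k) hσ.le
    _ ≤ b k := by rw [mul_div_cancel₀ _ hσ.ne']; exact min_le_left _ _

lemma inv_smul_mem_polyhedron_min_div {u : ι → E} (hu : ∀ k, ‖u k‖ ≤ 1) {b : ι → ℝ} {x : E}
    (hx : x ∈ polyhedron u b) {σ : ℝ} (hσ : 0 < σ) (hxσ : ‖x‖ ≤ σ) :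
    σ⁻¹ • x ∈ polyhedron u (fun k => min (b k) σ / σ) := by
  refine mem_polyhedron.2 fun k => ?_
  rw [real_inner_smul_left, inv_mul_eq_div]
  refine div_le_div_of_nonneg_right (le_min (mem_polyhedron.1 hx k) ?_) hσ.le
  exact (real_inner_le_norm _ _).trans ((mul_le_of_le_one_right (norm_nonneg x) (hu k)).trans hxσ)

variable [FiniteDimensional ℝ E] [MeasurableSpace E] [BorelSpace E]
  (μ : Measure E) [μ.IsAddHaarMeasure]

lemma tendsto_addHaar_smul_nhds_top [Nontrivial E] {U : Set E} (hU : μ U ≠ 0) {α : Type*}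
    {l : Filter α} {σ : α → ℝ} (hσ : Tendsto σ l atTop) :
    Tendsto (fun j => μ (σ j • U)) l (𝓝 ⊤) := by
  simp_rw [Measure.addHaar_smul]
  have hpow : Tendsto (fun j => ENNReal.ofReal (|σ j| ^ Module.finrank ℝ E)) l (𝓝 ⊤) :=
    ENNReal.tendsto_ofReal_atTop.comp <|
      (tendsto_pow_atTop Module.finrank_pos.ne').comp <| tendsto_abs_atTop_atTop.comp hσ
  simpa [ENNReal.top_mul hU] using
    ENNReal.Tendsto.mul_const (b := μ U) hpow (Or.inl ENNReal.top_ne_zero)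

lemma not_exists_forall_inner_lt_of_tendsto [Nontrivial E] [Finite ι] {u : ι → E} {α : Type*}
    {l : Filter α} [l.NeBot] {σ : α → ℝ} {γ : α → ι → ℝ} {g : ι → ℝ} {C : ENNReal}
    (hσ : Tendsto σ l atTop) (hγ : Tendsto γ l (𝓝 g)) (hC : C ≠ ⊤)
    (hvol : ∀ j, μ (σ j • polyhedron u (γ j)) ≤ C) : ¬∃ x, ∀ k, ⟪x, u k⟫ < g k := by
  rintro ⟨x, hx⟩
  obtain ⟨U, hU, hUsub⟩ := exists_mem_nhds_subset_polyhedron hx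
  have hbig := (tendsto_addHaar_smul_nhds_top μ (μ.measure_pos_of_mem_nhds hU).ne' hσ).eventually
    (lt_mem_nhds hC.lt_top)
  obtain ⟨j, hCj, hsub⟩ := (hbig.and (hγ.eventually hUsub)).exists
  exact (hCj.trans_le ((measure_mono (smul_set_mono hsub)).trans (hvol j))).false

theorem exists_limit_of_not_bounded [Finite ι] {u : ι → E} (hu : ∀ k, ‖u k‖ ≤ 1) {α : Type*}
    {b : α → ι → ℝ} (hb : ∀ m, 0 ≤ b m) {C : ENNReal} (hC : C ≠ ⊤)
    (hvol : ∀ m, μ (polyhedron u (b m)) ≤ C)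
    (hunb : ∀ R : ℝ, ∃ m, ¬polyhedron u (b m) ⊆ closedBall 0 R) :
    ∃ g, 0 ≤ g ∧ (∃ y ≠ 0, y ∈ polyhedron u g) ∧ ¬∃ x, ∀ k, ⟪x, u k⟫ < g k := by
  choose m hm using fun j : ℕ => hunb j
  choose x hxP hxR using fun j => not_subset.1 (hm j)
  simp only [mem_closedBall, dist_zero_right, not_le] at hxR
  have hσ : ∀ j, 0 < ‖x j‖ := fun j => (Nat.cast_nonneg j).trans_lt (hxR j)
  set γ : ℕ → ι → ℝ := fun j k => min (b (m j) k) ‖x j‖ / ‖x j‖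
  have hmem : ∀ j, (γ j, ‖x j‖⁻¹ • x j) ∈ Icc (0 : ι → ℝ) 1 ×ˢ sphere (0 : E) 1 := fun j =>
    ⟨⟨fun k => div_nonneg (le_min (hb _ k) (hσ j).le) (hσ j).le,
      fun k => div_le_one_of_le₀ (min_le_right _ _) (hσ j).le⟩, by simp [norm_smul, (hσ j).ne']⟩
  obtain ⟨⟨g, y⟩, ⟨hg, hy⟩, φ, hφ, hlim⟩ :=
    (isCompact_Icc.prod (isCompact_sphere 0 1)).tendsto_subseq hmem
  have hy0 : y ≠ 0 := ne_zero_of_mem_unit_sphere ⟨y, hy⟩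
  have : Nontrivial E := nontrivial_of_ne y 0 hy0
  refine ⟨g, hg.1, ⟨y, hy0, ?_⟩, ?_⟩
  · exact (isClosed_setOf_mem_polyhedron u).mem_of_tendsto hlim <| .of_forall fun j =>
      inv_smul_mem_polyhedron_min_div hu (hxP _) (hσ _) le_rfl
  · have hσlim : Tendsto (fun j => ‖x (φ j)‖) atTop atTop :=
      tendsto_atTop_mono (fun j => (hxR (φ j)).le)
        (tendsto_natCast_atTop_atTop.comp hφ.tendsto_atTop)
    exact not_exists_forall_inner_lt_of_tendsto μ hσlim hlim.fst_nhds hC fun j =>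
      (measure_mono (smul_polyhedron_min_div_subset (hσ _))).trans (hvol _)

end Polyhedra

theorem stmt14_general (n N : ℕ)
    (u : Fin N → EuclideanSpace ℝ (Fin n)) (hu : ∀ k, ‖u k‖ = 1)
    (hnoess : ∀ X : Submodule ℝ (EuclideanSpace ℝ (Fin n)),
      1 ≤ Module.finrank ℝ X → Module.finrank ℝ X ≤ n - 1 →
      ∃ x ∈ X, x ≠ 0 ∧ ∀ k, u k ∈ X → (inner ℝ x (u k) : ℝ) ≤ 0)
    (P : ℕ → Set (EuclideanSpace ℝ (Fin n))) (b : ℕ → Fin N → ℝ)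
    (hPdef : ∀ m, P m = ⋂ k, {x : EuclideanSpace ℝ (Fin n) | (inner ℝ x (u k) : ℝ) ≤ b m k})
    (hP0 : ∀ m, (0 : EuclideanSpace ℝ (Fin n)) ∈ interior (P m))
    (hvol : ∀ m, volume (P m) = 1) :
    ∃ R : ℝ, ∀ m, P m ⊆ closedBall 0 R := by
  obtain rfl : P = fun m => polyhedron u (b m) := funext hPdef
  by_contra! hunb
  have hb : ∀ m, 0 ≤ b m := fun m k => by
    simpa using mem_polyhedron.1 (interior_subset (hP0 m)) k
  obtain ⟨g, hg, ⟨y, hy0, hy⟩, hstrict⟩ := exists_limit_of_not_bounded volume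
    (fun k => (hu k).le) hb ENNReal.one_ne_top (fun m => (hvol m).le) hunb
  set S := (Finset.univ.filter (g · = 0)).image u
  have hS : ¬∃ x, ∀ v ∈ S, ⟪x, v⟫ < 0 := fun ⟨x, hx⟩ => hstrict <|
    exists_forall_inner_lt_of_forall_inner_neg hg fun k hk =>
      hx _ (Finset.mem_image_of_mem u (by simpa using hk))
  have hS0 : (0 : EuclideanSpace ℝ (Fin n)) ∉ S := by
    simp only [S, Finset.mem_image]
    rintro ⟨k, -, hk⟩
    simpa [hk] using hu k
  have hess : ∀ X, X ≠ ⊥ → X ≠ ⊤ → ¬IsEssential (S : Set (EuclideanSpace ℝ (Fin n))) X := by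
    intro X hbot htop hX
    have hlt := Submodule.finrank_lt htop
    rw [finrank_euclideanSpace_fin] at hlt
    obtain ⟨x, hxX, hx0, hxle⟩ := hnoess X (Submodule.one_le_finrank_iff.2 hbot) (by omega)
    obtain ⟨_, hv, hvX, hpos⟩ := hX x hxX hx0
    obtain ⟨k, -, rfl⟩ := Finset.mem_image.1 hv
    exact (hxle k hvX).not_gt hpos
  obtain ⟨_, hv, -, hpos⟩ :=
    isEssential_top_of_not_exists_forall_inner_neg hS0 hess hS y trivial hy0
  obtain ⟨k, hk, rfl⟩ := Finset.mem_image.1 hv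
  exact ((mem_polyhedron.1 hy k).trans_eq (Finset.mem_filter.1 hk).2).not_gt hpos

/-- Boundedness of volume-one polytopes with facet normals among {u_1,...,u_N},
when the measure has no essential subspace. -/
theorem stmt14 (n N : ℕ) (p : ℝ) (hp : p < 0) (α : Fin N → ℝ) (hα : ∀ k, 0 < α k)
    (u : Fin N → EuclideanSpace ℝ (Fin n)) (hu : ∀ k, ‖u k‖ = 1)
    (hhemi : ∀ x : EuclideanSpace ℝ (Fin n), x ≠ 0 → ∃ k, 0 < (inner ℝ x (u k) : ℝ))
    (hnoess : ∀ X : Submodule ℝ (EuclideanSpace ℝ (Fin n)),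
      1 ≤ Module.finrank ℝ X → Module.finrank ℝ X ≤ n - 1 →
      ∃ x ∈ X, x ≠ 0 ∧ ∀ k, u k ∈ X → (inner ℝ x (u k) : ℝ) ≤ 0)
    (P : ℕ → Set (EuclideanSpace ℝ (Fin n))) (b : ℕ → Fin N → ℝ)
    (hPdef : ∀ m, P m = ⋂ k, {x : EuclideanSpace ℝ (Fin n) | (inner ℝ x (u k) : ℝ) ≤ b m k})
    (hPbd : ∀ m, Bornology.IsBounded (P m))
    (hP0 : ∀ m, (0 : EuclideanSpace ℝ (Fin n)) ∈ interior (P m))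
    (hvol : ∀ m, volume (P m) = 1) :
    ∃ R : ℝ, ∀ m, P m ⊆ closedBall 0 R :=
  stmt14_general n N u hu hnoess P b hPdef hP0 hvol
end
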